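/- Let (X,F) be a nonautonomous system generated by a commutative family of homeomorphisms of a compact metric space. If x is a point of sensitivity, then ω_k(x) is a point of sensitivity for every k ∈ ℤ; more generally, every point of the orbital hull O_H(x) is a point of sensitivity. -/
import Mathlib


open Metric Filter

/-- Forward time maps: `posComp f n = f n ∘ ⋯ ∘ f 1`. -/
def posComp {X : Type*} [TopologicalSpace X] (f : ℕ → X ≃ₜ X) : ℕ → X → X
  | 0 => id
  | n + 1 => (f (n + 1)) ∘ posComp f n

/-- Backward time maps: `negComp f n = f 1⁻¹ ∘ ⋯ ∘ f n⁻¹`. -/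
def negComp {X : Type*} [TopologicalSpace X] (f : ℕ → X ≃ₜ X) : ℕ → X → X
  | 0 => id
  | n + 1 => negComp f n ∘ (f (n + 1)).symm

/-- The time-`n` map `ω_n` of the nonautonomous system generated by `f`. -/
def omegaMap {X : Type*} [TopologicalSpace X] (f : ℕ → X ≃ₜ X) (n : ℤ) : X → X :=
  if 0 ≤ n then posComp f n.toNat else negComp f (-n).toNat

/-- The family is commutative. -/
def Commutes {X : Type*} [TopologicalSpace X] (f : ℕ → X ≃ₜ X) : Prop :=
  ∀ i j, ∀ x : X, f i (f j x) = f j (f i x)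

/-- Orbit `O(x) = {ω_n x : n ∈ ℤ}`. -/
def orbit' {X : Type*} [TopologicalSpace X] (f : ℕ → X ≃ₜ X) (x : X) : Set X :=
  Set.range fun n : ℤ => omegaMap f n x

/-- Orbital hull `O_H(x) = {ω_{k_n} ∘ ⋯ ∘ ω_{k_1} x : k_i ∈ ℤ}`. -/
def orbitalHull {X : Type*} [TopologicalSpace X] (f : ℕ → X ≃ₜ X) (x : X) : Set X :=
  {y | ∃ l : List ℤ, y = l.foldr (fun k z => omegaMap f k z) x}

/-- Truncated orbital hull of order `k`. -/
def truncHull {X : Type*} [TopologicalSpace X] (f : ℕ → X ≃ₜ X) (k : ℕ) (x : X) : Set X :=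
  {y | ∃ l : List ℤ, (∀ r ∈ l, |r| ≤ (k : ℤ)) ∧ y = l.foldr (fun j z => omegaMap f j z) x}

/-- `x` is periodic of period `r`: `ω_{n r} x = x` for all `n ∈ ℤ`. -/
def PeriodicPt {X : Type*} [TopologicalSpace X] (f : ℕ → X ≃ₜ X) (r : ℕ) (x : X) : Prop :=
  ∀ n : ℤ, omegaMap f (n * r) x = x

/-- `Y` is invariant: `ω_k(Y) ⊆ Y` for all `k ∈ ℤ`. -/
def Invariant {X : Type*} [TopologicalSpace X] (f : ℕ → X ≃ₜ X) (Y : Set X) : Prop :=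
  ∀ k : ℤ, omegaMap f k '' Y ⊆ Y

/-- The system is minimal: no proper nonempty closed invariant subset. -/
def MinimalSys {X : Type*} [TopologicalSpace X] (f : ℕ → X ≃ₜ X) : Prop :=
  ∀ Y : Set X, Y.Nonempty → IsClosed Y → Invariant f Y → Y = Set.univ

/-- Equicontinuity of the system. -/
def Equicont {X : Type*} [MetricSpace X] (f : ℕ → X ≃ₜ X) : Prop :=
  ∀ ε > (0 : ℝ), ∃ δ > (0 : ℝ), ∀ a b : X, dist a b < δ →
    ∀ n : ℤ, dist (omegaMap f n a) (omegaMap f n b) < ε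

/-- `S ⊆ ℤ` is `M`-syndetic. -/
def MSyndetic (S : Set ℤ) (M : ℤ) : Prop :=
  ∀ a : ℤ, ∃ n ∈ S, a ≤ n ∧ n < a + M

/-- `x` is almost periodic. -/
def AlmostPeriodicPt {X : Type*} [MetricSpace X] (f : ℕ → X ≃ₜ X) (x : X) : Prop :=
  ∀ ε > (0 : ℝ), ∃ M : ℤ, 0 < M ∧ MSyndetic {n : ℤ | dist (omegaMap f n x) x < ε} M

/-- The system is sensitive at `x`. -/
def SensitiveAt {X : Type*} [MetricSpace X] (f : ℕ → X ≃ₜ X) (x : X) : Prop :=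
  ∃ δ > (0 : ℝ), ∀ U : Set X, IsOpen U → x ∈ U → ∃ m : ℤ, δ < diam (omegaMap f m '' U)

/-- Topological transitivity. -/
def TopTransitive {X : Type*} [TopologicalSpace X] (f : ℕ → X ≃ₜ X) : Prop :=
  ∀ U V : Set X, IsOpen U → IsOpen V → U.Nonempty → V.Nonempty →
    ∃ k : ℤ, ((omegaMap f k '' U) ∩ V).Nonempty

section Aux

variable {X : Type*} [TopologicalSpace X] (f : ℕ → X ≃ₜ X)

lemma posComp_continuous (n : ℕ) : Continuous (posComp f n) := by
  induction n with
  | zero => exact continuous_id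
  | succ n ih => exact (f (n + 1)).continuous.comp ih

lemma negComp_continuous (n : ℕ) : Continuous (negComp f n) := by
  induction n with
  | zero => exact continuous_id
  | succ n ih => exact ih.comp (f (n + 1)).symm.continuous

lemma omegaMap_continuous (k : ℤ) : Continuous (omegaMap f k) := by
  unfold omegaMap
  split
  · exact posComp_continuous f _
  · exact negComp_continuous f _

lemma posComp_negComp (n : ℕ) (x : X) : posComp f n (negComp f n x) = x := by
  induction n generalizing x with
  | zero => rfl
  | succ n ih =>
    show f (n + 1) (posComp f n (negComp f n ((f (n + 1)).symm x))) = x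
    rw [ih, Homeomorph.apply_symm_apply]

lemma negComp_posComp (n : ℕ) (x : X) : negComp f n (posComp f n x) = x := by
  induction n generalizing x with
  | zero => rfl
  | succ n ih =>
    show negComp f n ((f (n + 1)).symm (f (n + 1) (posComp f n x))) = x
    rw [Homeomorph.symm_apply_apply, ih]

lemma omegaMap_neg (k : ℤ) (x : X) : omegaMap f (-k) (omegaMap f k x) = x := by
  rcases eq_or_ne k 0 with rfl | hk
  · rfl
  rcases le_or_gt 0 k with hk0 | hk0
  · have h2 : ¬ (0 ≤ -k) := by omega
    simp only [omegaMap, if_pos hk0, if_neg h2, neg_neg]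
    exact negComp_posComp f _ x
  · have h2 : (0 ≤ -k) := by omega
    have h1 : ¬ (0 ≤ k) := by omega
    simp only [omegaMap, if_neg h1, if_pos h2]
    exact posComp_negComp f _ x

lemma comm_symm (hcomm : Commutes f) (i j : ℕ) (x : X) : f i ((f j).symm x) = (f j).symm (f i x) := by
  apply (f j).injective
  rw [hcomm j i, Homeomorph.apply_symm_apply, Homeomorph.apply_symm_apply]

lemma comm_symm_symm (hcomm : Commutes f) (i j : ℕ) (x : X) :
    (f i).symm ((f j).symm x) = (f j).symm ((f i).symm x) := by
  apply (f i).injective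
  rw [Homeomorph.apply_symm_apply, comm_symm f hcomm, Homeomorph.apply_symm_apply]

lemma posComp_comm (hcomm : Commutes f) (n j : ℕ) (x : X) :
    posComp f n (f j x) = f j (posComp f n x) := by
  induction n generalizing x with
  | zero => rfl
  | succ n ih =>
    show f (n + 1) (posComp f n (f j x)) = f j (f (n + 1) (posComp f n x))
    rw [ih, hcomm]

lemma posComp_symm_comm (hcomm : Commutes f) (n j : ℕ) (x : X) :
    posComp f n ((f j).symm x) = (f j).symm (posComp f n x) := by
  induction n generalizing x with
  | zero => rfl
  | succ n ih =>
    show f (n + 1) (posComp f n ((f j).symm x)) = (f j).symm (f (n + 1) (posComp f n x))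
    rw [ih, comm_symm f hcomm]

lemma negComp_comm (hcomm : Commutes f) (n j : ℕ) (x : X) :
    negComp f n (f j x) = f j (negComp f n x) := by
  induction n generalizing x with
  | zero => rfl
  | succ n ih =>
    show negComp f n ((f (n + 1)).symm (f j x)) = f j (negComp f n ((f (n + 1)).symm x))
    rw [← comm_symm f hcomm, ih]

lemma negComp_symm_comm (hcomm : Commutes f) (n j : ℕ) (x : X) :
    negComp f n ((f j).symm x) = (f j).symm (negComp f n x) := by
  induction n generalizing x with
  | zero => rfl
  | succ n ih =>
    show negComp f n ((f (n + 1)).symm ((f j).symm x))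
        = (f j).symm (negComp f n ((f (n + 1)).symm x))
    rw [comm_symm_symm f hcomm, ih]

lemma posComp_posComp (hcomm : Commutes f) (m n : ℕ) (x : X) :
    posComp f m (posComp f n x) = posComp f n (posComp f m x) := by
  induction n generalizing x with
  | zero => rfl
  | succ n ih =>
    show posComp f m (f (n + 1) (posComp f n x)) = f (n + 1) (posComp f n (posComp f m x))
    rw [posComp_comm f hcomm, ih]

lemma posComp_negComp_comm (hcomm : Commutes f) (m n : ℕ) (x : X) :
    posComp f m (negComp f n x) = negComp f n (posComp f m x) := by
  induction n generalizing x with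
  | zero => rfl
  | succ n ih =>
    show posComp f m (negComp f n ((f (n + 1)).symm x))
        = negComp f n ((f (n + 1)).symm (posComp f m x))
    rw [ih, posComp_symm_comm f hcomm]

lemma negComp_negComp (hcomm : Commutes f) (m n : ℕ) (x : X) :
    negComp f m (negComp f n x) = negComp f n (negComp f m x) := by
  induction n generalizing x with
  | zero => rfl
  | succ n ih =>
    show negComp f m (negComp f n ((f (n + 1)).symm x))
        = negComp f n ((f (n + 1)).symm (negComp f m x))
    rw [ih, negComp_symm_comm f hcomm]

lemma omegaMap_comm (hcomm : Commutes f) (m k : ℤ) (x : X) :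
    omegaMap f m (omegaMap f k x) = omegaMap f k (omegaMap f m x) := by
  unfold omegaMap
  split <;> split
  · exact posComp_posComp f hcomm _ _ x
  · exact (posComp_negComp_comm f hcomm _ _ x)
  · exact (posComp_negComp_comm f hcomm _ _ x).symm
  · exact negComp_negComp f hcomm _ _ x

end Aux

lemma sensitive_transfer {X : Type*} [MetricSpace X] [CompactSpace X] (f : ℕ → X ≃ₜ X)
    (hcomm : Commutes f) (k : ℤ) (z : X) (hz : SensitiveAt f z) :
    SensitiveAt f (omegaMap f k z) := by
  obtain ⟨δ, hδ, hs⟩ := hz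
  have hgc : Continuous (omegaMap f (-k)) := omegaMap_continuous f (-k)
  have huc : UniformContinuous (omegaMap f (-k)) :=
    CompactSpace.uniformContinuous_of_continuous hgc
  obtain ⟨δ', hδ', hmod⟩ := Metric.uniformContinuous_iff.mp huc δ hδ
  refine ⟨δ' / 2, by positivity, ?_⟩
  intro U hU hxU
  have hVopen : IsOpen (omegaMap f k ⁻¹' U) := hU.preimage (omegaMap_continuous f k)
  have hzV : z ∈ omegaMap f k ⁻¹' U := hxU
  obtain ⟨m, hm⟩ := hs _ hVopen hzV
  refine ⟨m, ?_⟩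
  by_contra hcon
  push_neg at hcon
  have hsub : omegaMap f m '' (omegaMap f k ⁻¹' U)
      ⊆ omegaMap f (-k) '' (omegaMap f m '' U) := by
    rintro _ ⟨v, hv, rfl⟩
    refine ⟨omegaMap f m (omegaMap f k v), ⟨omegaMap f k v, hv, rfl⟩, ?_⟩
    rw [omegaMap_comm f hcomm, omegaMap_neg]
  have hbdd : Bornology.IsBounded (omegaMap f m '' U) :=
    (isCompact_univ.isBounded).subset (Set.subset_univ _)
  have hle : diam (omegaMap f m '' (omegaMap f k ⁻¹' U)) ≤ δ := by
    apply diam_le_of_forall_dist_le hδ.le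
    intro a ha b hb
    obtain ⟨p, hp, rfl⟩ := hsub ha
    obtain ⟨q, hq, rfl⟩ := hsub hb
    have : dist p q < δ' := by
      have := dist_le_diam_of_mem hbdd hp hq
      linarith
    exact (hmod this).le
  linarith

theorem stmt16 {X : Type*} [MetricSpace X] [CompactSpace X] (f : ℕ → X ≃ₜ X)
    (hcomm : Commutes f) (x : X) (hx : SensitiveAt f x) :
    (∀ k : ℤ, SensitiveAt f (omegaMap f k x)) ∧
    (∀ y ∈ orbitalHull f x, SensitiveAt f y) := by
  constructor
  · intro k
    exact sensitive_transfer f hcomm k x hx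
  · rintro y ⟨l, rfl⟩
    induction l with
    | nil => exact hx
    | cons k t ih => exact sensitive_transfer f hcomm k _ ih
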